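/- Let c > 0 and let (k(n))_n be a sequence of positive integers with k(n)/n → c. For each n let ρ_n = X_n·X_n*/tr(X_n·X_n*), where X_n is an n × k(n) random complex matrix with i.i.d. standard complex Gaussian entries, and let λ_max(ρ_n) be the largest eigenvalue of ρ_n. Then, almost surely, c·n·λ_max(ρ_n) → (√c + 1)² as n → ∞. (This may be assumed from the corresponding Wishart result: if W_n = X_n·X_n* then λ_max(W_n)/n → (√c + 1)² almost surely.) -/

import Mathlib

open MeasureTheory ProbabilityTheory Matrix Filter Topology

/-- The standard complex Gaussian distribution on `ℂ`:
`Z = X + iY` with `X, Y` independent real Gaussians of mean `0` and variance `1/2`. -/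
noncomputable def stdCGaussian : Measure ℂ :=
  ((gaussianReal 0 (1/2)).prod (gaussianReal 0 (1/2))).map
    (fun p : ℝ × ℝ => p.1 + p.2 * Complex.I)

/-- A measurable-space structure on matrices (as functions). -/
instance matrixMeasurableSpace {m n α : Type*} [MeasurableSpace α] :
    MeasurableSpace (Matrix m n α) :=
  inferInstanceAs (MeasurableSpace (m → n → α))

/-- The law of an `n × k` matrix with i.i.d. standard complex Gaussian entries. -/
noncomputable def gaussMatrix (n k : ℕ) : Measure (Matrix (Fin n) (Fin k) ℂ) :=
  Measure.pi fun _ : Fin n => (Measure.pi fun _ : Fin k => stdCGaussian)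

instance stdCGaussianProb : IsProbabilityMeasure stdCGaussian := by
  have hm : Measurable fun p : ℝ × ℝ => p.1 + p.2 * Complex.I := by fun_prop
  exact Measure.isProbabilityMeasure_map hm.aemeasurable

instance gaussMatrixProb (n k : ℕ) : IsProbabilityMeasure (gaussMatrix n k) :=
  inferInstanceAs (IsProbabilityMeasure
    (Measure.pi fun _ : Fin n => (Measure.pi fun _ : Fin k => stdCGaussian)))

/-- The random density matrix `ρ = X Xᴴ / tr (X Xᴴ)` built from an `n × k` matrix `X`. -/
noncomputable def densityMatrix {n k : ℕ} (X : Matrix (Fin n) (Fin k) ℂ) :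
    Matrix (Fin n) (Fin n) ℂ :=
  (Matrix.trace (X * Xᴴ))⁻¹ • (X * Xᴴ)

lemma densityMatrix_isHermitian {n k : ℕ} (X : Matrix (Fin n) (Fin k) ℂ) :
    (densityMatrix X).IsHermitian := by
  have h : (X * Xᴴ).IsHermitian := Matrix.isHermitian_mul_conjTranspose_self X
  have hs : star (Matrix.trace (X * Xᴴ)) = Matrix.trace (X * Xᴴ) := by
    rw [← Matrix.trace_conjTranspose, h.eq]
  show ((Matrix.trace (X * Xᴴ))⁻¹ • (X * Xᴴ))ᴴ = _
  rw [Matrix.conjTranspose_smul, star_inv₀, hs, h.eq]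
  rfl

/-- The Vandermonde product `Δ(λ) = ∏_{i<j} (λ_i - λ_j)`. -/
noncomputable def vdm {n : ℕ} (lam : Fin n → ℝ) : ℝ :=
  ∏ p ∈ Finset.univ.filter (fun p : Fin n × Fin n => p.1 < p.2), (lam p.1 - lam p.2)

/-- The normalization constant of the Wishart eigenvalue density. -/
noncomputable def wishartConst (n k : ℕ) : ℝ :=
  (∏ j ∈ Finset.range n, Real.Gamma ((n : ℝ) + 1 - j) * Real.Gamma ((k : ℝ) - j))⁻¹

/-- The joint eigenvalue density of the Wishart ensemble on `ℝ₊ⁿ`. -/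
noncomputable def wishartEigDensity (n k : ℕ) (lam : Fin n → ℝ) : ℝ :=
  wishartConst n k * Real.exp (-(∑ i, lam i)) * (∏ i, lam i ^ (k - n)) * vdm lam ^ 2

/-- Extension of a point of the `(n-1)`-dimensional simplex to its `n` coordinates. -/
noncomputable def extendSimplex {n : ℕ} (x : Fin (n - 1) → ℝ) : Fin n → ℝ :=
  fun i => if h : (i : ℕ) < n - 1 then x ⟨i, h⟩ else 1 - ∑ j, x j

/-- The simplex domain in coordinates `(x_1, …, x_{n-1})`. -/
def simplexDom (n : ℕ) : Set (Fin (n - 1) → ℝ) :=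
  {x | (∀ i, 0 ≤ x i) ∧ ∑ i, x i ≤ 1}

/-- The joint eigenvalue density of a random density matrix, in the coordinates
`(λ̃_1, …, λ̃_{n-1})` on the probability simplex. -/
noncomputable def rhoEigDensity (n k : ℕ) (x : Fin (n - 1) → ℝ) : ℝ :=
  (Real.Gamma ((n : ℝ) * k) * wishartConst n k) *
    (∏ i : Fin n, extendSimplex x i ^ (k - n)) * vdm (extendSimplex x) ^ 2

/-- A measurable-space structure on a projective space, as a quotient. -/
instance projMeasurableSpace {K V : Type*} [DivisionRing K] [AddCommGroup V] [Module K V]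
    [MeasurableSpace V] : MeasurableSpace (Projectivization K V) :=
  inferInstanceAs (MeasurableSpace (Quotient (projectivizationSetoid K V)))

lemma unitary_mulVecLin_injective {n : ℕ} (U : Matrix.unitaryGroup (Fin n) ℂ) :
    Function.Injective (Matrix.mulVecLin (U : Matrix (Fin n) (Fin n) ℂ)) := by
  intro x y hxy
  have h := congrArg (fun v => Matrix.mulVec (star (U : Matrix (Fin n) (Fin n) ℂ)) v) hxy
  simpa [Matrix.mulVecLin_apply, Matrix.mulVec_mulVec, Matrix.UnitaryGroup.star_mul_self,
    Matrix.one_mulVec] using h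

/-- The action of a unitary matrix on the projective space `ℙ(ℂⁿ)`, `U·[x] = [Ux]`. -/
noncomputable def unitaryProjMap {n : ℕ} (U : Matrix.unitaryGroup (Fin n) ℂ) :
    Projectivization ℂ (Fin n → ℂ) → Projectivization ℂ (Fin n → ℂ) :=
  Projectivization.map (Matrix.mulVecLin (U : Matrix (Fin n) (Fin n) ℂ))
    (unitary_mulVecLin_injective U)

/-- The projective class of a vector (junk value for `x = 0`). -/
noncomputable def projOf {n : ℕ} (hn : 0 < n) (x : Fin n → ℂ) :
    Projectivization ℂ (Fin n → ℂ) :=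
  if h : x ≠ 0 then Projectivization.mk ℂ x h
  else Projectivization.mk ℂ (fun _ => 1) (fun h0 => one_ne_zero (congrFun h0 ⟨0, hn⟩))



section StmtAux

-- log inequalities
lemma log_ineq1 {t : ℝ} (h0 : 0 ≤ t) (h2 : t ≤ 1/2) : Real.log (1-t)⁻¹ ≤ t + 2*t^2 := by
  have h1 : (0:ℝ) < 1 - t := by linarith
  have h3 := Real.log_le_sub_one_of_pos (inv_pos.mpr h1)
  have h4 : (1-t)⁻¹ ≤ 1 + t + 2*t^2 := by
    rw [inv_le_iff_one_le_mul₀ h1]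
    nlinarith [sq_nonneg t]
  linarith
lemma log_ineq2 {s : ℝ} (h0 : 0 ≤ s) : s - s^2 ≤ Real.log (1+s) := by
  have h1 : (0:ℝ) < 1 + s := by linarith
  have h3 := Real.log_le_sub_one_of_pos (inv_pos.mpr h1)
  rw [Real.log_inv] at h3
  have h4 : s - s^2 ≤ 1 - (1+s)⁻¹ := by
    have h5 : (1+s)⁻¹ ≤ 1 - s + s^2 := by
      rw [inv_le_iff_one_le_mul₀ h1]
      nlinarith [pow_nonneg h0 3]
    linarith
  linarith

-- geometric summability
lemma summable_exp_neg (a : ℝ) (ha : 0 < a) :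
    Summable (fun n : ℕ => 2 * Real.exp (-(n:ℝ) * a)) := by
  apply Summable.mul_left
  have : (fun n : ℕ => Real.exp (-(n:ℝ) * a)) = fun n : ℕ => (Real.exp (-a))^n := by
    funext n
    rw [← Real.exp_nat_mul]
    ring_nf
  rw [this]
  exact summable_geometric_of_lt_one (Real.exp_nonneg _)
    (Real.exp_lt_one_iff.mpr (by linarith))

lemma ciSup_scale {n : ℕ} (hn : 0 < n) (f g : Fin n → ℝ) (r : ℝ) (hr : 0 ≤ r)
    (h : Set.range f = (fun x => r * x) '' Set.range g) : ⨆ i, f i = r * ⨆ i, g i := by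
  haveI : Nonempty (Fin n) := Fin.pos_iff_nonempty.mp hn
  apply le_antisymm
  · apply ciSup_le
    intro i
    have hi : f i ∈ Set.range f := Set.mem_range_self i
    rw [h] at hi
    obtain ⟨y, ⟨j, rfl⟩, hfy⟩ := hi
    rw [← hfy]
    exact mul_le_mul_of_nonneg_left (le_ciSup (Finite.bddAbove_range g) j) hr
  · obtain ⟨j0, hj0⟩ := Finite.exists_max g
    have h1 : ⨆ i, g i ≤ g j0 := ciSup_le hj0
    have h2 : r * g j0 ∈ Set.range f := by
      rw [h]; exact ⟨g j0, Set.mem_range_self j0, rfl⟩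
    obtain ⟨i0, hi0⟩ := h2
    calc r * ⨆ i, g i ≤ r * g j0 := mul_le_mul_of_nonneg_left h1 hr
    _ = f i0 := hi0.symm
    _ ≤ ⨆ i, f i := le_ciSup (Finite.bddAbove_range f) i0

lemma trace_eq_sum_normSq {n k : ℕ} (X : Matrix (Fin n) (Fin k) ℂ) :
    Matrix.trace (X * Xᴴ) = ((∑ i, ∑ j, Complex.normSq (X i j) : ℝ) : ℂ) := by
  rw [Matrix.trace]
  push_cast
  apply Finset.sum_congr rfl
  intro i _
  rw [Matrix.diag_apply, Matrix.mul_apply]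
  apply Finset.sum_congr rfl
  intro j _
  rw [Matrix.conjTranspose_apply]
  exact Complex.mul_conj _

lemma sup_eig_scale {n k : ℕ} (hn : 0 < n) (X : Matrix (Fin n) (Fin k) ℂ)
    {T : ℝ} (hT : 0 < T) (hTr : Matrix.trace (X * Xᴴ) = (T : ℂ)) :
    ⨆ i, (densityMatrix_isHermitian X).eigenvalues i
      = (⨆ i, (Matrix.isHermitian_mul_conjTranspose_self X).eigenvalues i) / T := by
  have hd : densityMatrix X = T⁻¹ • (X * Xᴴ) := by
    rw [densityMatrix, hTr]
    ext i j
    simp [Matrix.smul_apply, Complex.real_smul, Complex.ofReal_inv]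
  have hrange : Set.range (densityMatrix_isHermitian X).eigenvalues
      = (fun x => T⁻¹ * x) ''
        Set.range (Matrix.isHermitian_mul_conjTranspose_self X).eigenvalues := by
    rw [← Matrix.IsHermitian.spectrum_real_eq_range_eigenvalues,
      ← Matrix.IsHermitian.spectrum_real_eq_range_eigenvalues, hd]
    have hu : T⁻¹ • (X * Xᴴ) = (Units.mk0 T⁻¹ (inv_ne_zero hT.ne')) • (X * Xᴴ) := rfl
    rw [hu, spectrum.unit_smul_eq_smul]
    ext x
    simp [Units.smul_def, Set.mem_smul_set, eq_comm]
  rw [ciSup_scale hn _ _ T⁻¹ (inv_nonneg.mpr hT.le) hrange, div_eq_inv_mul]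

lemma half_ne_zero' : (1/2 : NNReal) ≠ 0 := by norm_num

lemma gauss_pdf_eq (x : ℝ) :
    gaussianPDFReal 0 (1/2) x = (Real.sqrt Real.pi)⁻¹ * Real.exp (-x^2) := by
  rw [gaussianPDFReal]
  norm_num
  have h2 : Real.sqrt 2 ≠ 0 := by positivity
  field_simp

lemma gauss_pdf_nonneg (x : ℝ) : 0 ≤ gaussianPDFReal 0 (1/2) x :=
  gaussianPDFReal_nonneg _ _ _

-- the one-dimensional integral
lemma J_eq {t : ℝ} (ht : t < 1) :
    ∫ x, Real.exp (t * x^2) ∂(gaussianReal 0 (1/2))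
      = (Real.sqrt Real.pi)⁻¹ * Real.sqrt (Real.pi / (1-t)) := by
  rw [gaussianReal_of_var_ne_zero 0 half_ne_zero', gaussianPDF_def]
  have hmeq : (fun x => ENNReal.ofReal (gaussianPDFReal 0 (1/2) x))
      = fun x => ((gaussianPDFReal 0 (1/2) x).toNNReal : ENNReal) := rfl
  rw [hmeq, integral_withDensity_eq_integral_smul
    (measurable_gaussianPDFReal 0 (1/2)).real_toNNReal]
  have heq : (fun x => (gaussianPDFReal 0 (1/2) x).toNNReal • Real.exp (t * x^2))
      = fun x => (Real.sqrt Real.pi)⁻¹ * Real.exp (-(1-t) * x^2) := by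
    funext x
    rw [NNReal.smul_def, Real.coe_toNNReal _ (gauss_pdf_nonneg x), gauss_pdf_eq, smul_eq_mul,
      mul_assoc, ← Real.exp_add]
    ring_nf
  rw [heq, MeasureTheory.integral_const_mul, integral_gaussian]

lemma integrable_J {t : ℝ} (ht : t < 1) :
    Integrable (fun x => Real.exp (t * x^2)) (gaussianReal 0 (1/2)) := by
  rw [gaussianReal_of_var_ne_zero 0 half_ne_zero', gaussianPDF_def]
  have hmeq : (fun x => ENNReal.ofReal (gaussianPDFReal 0 (1/2) x))
      = fun x => ((gaussianPDFReal 0 (1/2) x).toNNReal : ENNReal) := rfl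
  rw [hmeq, integrable_withDensity_iff_integrable_smul
    (measurable_gaussianPDFReal 0 (1/2)).real_toNNReal]
  have heq : (fun x => (gaussianPDFReal 0 (1/2) x).toNNReal • Real.exp (t * x^2))
      = fun x => (Real.sqrt Real.pi)⁻¹ * Real.exp (-(1-t) * x^2) := by
    funext x
    rw [NNReal.smul_def, Real.coe_toNNReal _ (gauss_pdf_nonneg x), gauss_pdf_eq, smul_eq_mul,
      mul_assoc, ← Real.exp_add]
    ring_nf
  rw [heq]
  exact (integrable_exp_neg_mul_sq (by linarith)).const_mul _

lemma measurable_addI : Measurable (fun p : ℝ × ℝ => p.1 + p.2 * Complex.I) := by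
  fun_prop

lemma measurable_expnormSq (t : ℝ) : Measurable fun z : ℂ => Real.exp (t * Complex.normSq z) :=
  (Real.continuous_exp.comp (continuous_const.mul Complex.continuous_normSq)).measurable

lemma I_eq {t : ℝ} (ht : t < 1) :
    ∫ z, Real.exp (t * Complex.normSq z) ∂stdCGaussian = (1-t)⁻¹ := by
  rw [stdCGaussian, integral_map measurable_addI.aemeasurable
    (measurable_expnormSq t).aestronglyMeasurable]
  have heq : (fun p : ℝ × ℝ => Real.exp (t * Complex.normSq (p.1 + p.2 * Complex.I)))
      = fun p : ℝ × ℝ => Real.exp (t * p.1^2) * Real.exp (t * p.2^2) := by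
    funext p
    rw [Complex.normSq_add_mul_I, ← Real.exp_add]
    ring_nf
  rw [heq, MeasureTheory.integral_prod_mul (f := fun x : ℝ => Real.exp (t*x^2))
    (g := fun x : ℝ => Real.exp (t*x^2)), J_eq ht]
  have h1t : (0:ℝ) < 1 - t := by linarith
  have hπ : (0:ℝ) < Real.pi := Real.pi_pos
  have e1 : ((Real.sqrt Real.pi)⁻¹ * Real.sqrt (Real.pi/(1-t)))
        * ((Real.sqrt Real.pi)⁻¹ * Real.sqrt (Real.pi/(1-t)))
      = (Real.sqrt Real.pi * Real.sqrt Real.pi)⁻¹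
        * (Real.sqrt (Real.pi/(1-t)) * Real.sqrt (Real.pi/(1-t))) := by
    rw [mul_inv]; ring
  rw [e1, Real.mul_self_sqrt hπ.le, Real.mul_self_sqrt (by positivity)]
  field_simp

lemma integrable_I {t : ℝ} (ht : t < 1) :
    Integrable (fun z => Real.exp (t * Complex.normSq z)) stdCGaussian := by
  rw [stdCGaussian]
  rw [integrable_map_measure
    (measurable_expnormSq t).aestronglyMeasurable
    measurable_addI.aemeasurable]
  have heq : ((fun z : ℂ => Real.exp (t * Complex.normSq z)) ∘ (fun p : ℝ × ℝ => p.1 + p.2 * Complex.I))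
      = fun p : ℝ × ℝ => Real.exp (t * p.1^2) * Real.exp (t * p.2^2) := by
    funext p
    simp only [Function.comp_apply]
    rw [Complex.normSq_add_mul_I, ← Real.exp_add]
    ring_nf
  rw [heq]
  exact (integrable_J ht).mul_prod (integrable_J ht)

lemma exp_sum_eq (n kk : ℕ) (t : ℝ) (M : Matrix (Fin n) (Fin kk) ℂ) :
    Real.exp (t * ∑ i, ∑ j, Complex.normSq (M i j))
      = ∏ i, ∏ j, Real.exp (t * Complex.normSq (M i j)) := by
  rw [Finset.mul_sum, Real.exp_sum]
  exact Finset.prod_congr rfl fun i _ => by rw [Finset.mul_sum, Real.exp_sum]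

lemma mgf_gaussMatrix (n kk : ℕ) {t : ℝ} (ht : t < 1) :
    ∫ M, Real.exp (t * ∑ i, ∑ j, Complex.normSq (M i j)) ∂(gaussMatrix n kk)
      = ((1-t)⁻¹) ^ (n * kk) := by
  letI : MeasureSpace ℂ := ⟨stdCGaussian⟩
  haveI : SigmaFinite (volume : Measure ℂ) :=
    inferInstanceAs (SigmaFinite stdCGaussian)
  simp_rw [exp_sum_eq]
  have h1 : ∫ (M : Matrix (Fin n) (Fin kk) ℂ),
        ∏ i, ∏ j, Real.exp (t * Complex.normSq (M i j)) ∂(gaussMatrix n kk)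
      = ∫ (x : Fin n → Fin kk → ℂ), ∏ i, ∏ j, Real.exp (t * Complex.normSq (x i j)) := rfl
  rw [h1]
  rw [MeasureTheory.volume_pi, MeasureTheory.integral_fintype_prod_eq_pow (ι := Fin n)
    (f := fun y : Fin kk → ℂ => ∏ j, Real.exp (t * Complex.normSq (y j)))]
  rw [MeasureTheory.volume_pi, MeasureTheory.integral_fintype_prod_eq_pow (ι := Fin kk)
    (f := fun z : ℂ => Real.exp (t * Complex.normSq z))]
  have : (∫ z : ℂ, Real.exp (t * Complex.normSq z)) = (1-t)⁻¹ := I_eq ht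
  rw [this, ← pow_mul, Fintype.card_fin, Fintype.card_fin, mul_comm kk n]

lemma integrable_gaussMatrix (n kk : ℕ) {t : ℝ} (ht : t < 1) :
    Integrable (fun M => Real.exp (t * ∑ i, ∑ j, Complex.normSq (M i j)))
      (gaussMatrix n kk) := by
  letI : MeasureSpace ℂ := ⟨stdCGaussian⟩
  haveI : SigmaFinite (volume : Measure ℂ) :=
    inferInstanceAs (SigmaFinite stdCGaussian)
  simp_rw [exp_sum_eq]
  have hinner : Integrable (fun y : Fin kk → ℂ => ∏ j, Real.exp (t * Complex.normSq (y j)))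
      (volume : Measure (∀ _ : Fin kk, ℂ)) :=
    Integrable.fintype_prod (f := fun (_ : Fin kk) (z : ℂ) => Real.exp (t * Complex.normSq z))
      (fun _ => integrable_I ht)
  have houter : Integrable
      (fun x : Fin n → Fin kk → ℂ => ∏ i, ∏ j, Real.exp (t * Complex.normSq (x i j)))
      (volume : Measure (∀ _ : Fin n, (∀ _ : Fin kk, ℂ))) :=
    Integrable.fintype_prod
      (f := fun (_ : Fin n) (y : Fin kk → ℂ) => ∏ j, Real.exp (t * Complex.normSq (y j)))
      (fun _ => hinner)
  exact houter

lemma chernoff_up_num {ε Nr : ℝ} (hε0 : 0 < ε) (hε1 : ε ≤ 1) (hNr : 0 ≤ Nr) (N : ℕ)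
    (hN : Nr = (N:ℝ)) :
    Real.exp (-(ε/4) * (Nr*(1+ε))) * ((1-ε/4)⁻¹)^N ≤ Real.exp (-(Nr * (ε^2/8))) := by
  have h1 : (0:ℝ) < (1-ε/4)⁻¹ := by
    apply inv_pos.mpr; linarith
  have h2 : ((1-ε/4)⁻¹)^N = Real.exp ((N:ℝ) * Real.log (1-ε/4)⁻¹) := by
    rw [Real.exp_nat_mul, Real.exp_log h1]
  rw [h2, ← Real.exp_add, Real.exp_le_exp, ← hN]
  have h3 := log_ineq1 (by linarith : (0:ℝ) ≤ ε/4) (by linarith : ε/4 ≤ 1/2)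
  nlinarith [mul_le_mul_of_nonneg_left h3 hNr]

lemma chernoff_down_num {ε Nr : ℝ} (hε0 : 0 < ε) (hε1 : ε ≤ 1) (hNr : 0 ≤ Nr) (N : ℕ)
    (hN : Nr = (N:ℝ)) :
    Real.exp (-(-(ε/2)) * (Nr*(1-ε))) * ((1-(-(ε/2)))⁻¹)^N ≤ Real.exp (-(Nr * (ε^2/8))) := by
  have h1 : (0:ℝ) < (1+ε/2)⁻¹ := by
    apply inv_pos.mpr; linarith
  have h2 : ((1-(-(ε/2)))⁻¹)^N = Real.exp ((N:ℝ) * Real.log (1+ε/2)⁻¹) := by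
    rw [Real.exp_nat_mul, Real.exp_log h1]
    norm_num
  rw [h2, ← Real.exp_add, Real.exp_le_exp, ← hN, Real.log_inv]
  have h3 := log_ineq2 (by linarith : (0:ℝ) ≤ ε/2)
  nlinarith [mul_le_mul_of_nonneg_left h3 hNr]


lemma measurable_TFun (n kk : ℕ) :
    Measurable (fun M : Matrix (Fin n) (Fin kk) ℂ => ∑ i, ∑ j, Complex.normSq (M i j)) := by
  apply Finset.measurable_sum
  intro i _
  apply Finset.measurable_sum
  intro j _
  exact Complex.continuous_normSq.measurable.comp ((measurable_pi_apply j).comp (measurable_pi_apply i))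

lemma tail_bound {Ω : Type*} [MeasureSpace Ω] [IsProbabilityMeasure (volume : Measure Ω)]
    {n kk : ℕ} (hn : 0 < n) (hkk : 0 < kk) (Y : Ω → Matrix (Fin n) (Fin kk) ℂ)
    (hYm : Measurable Y) (hY : (volume : Measure Ω).map Y = gaussMatrix n kk)
    {ε : ℝ} (hε0 : 0 < ε) (hε1 : ε ≤ 1) :
    volume {ω : Ω | ε ≤ |(∑ i, ∑ j, Complex.normSq (Y ω i j)) / ((n:ℝ)*(kk:ℝ)) - 1|}
      ≤ ENNReal.ofReal (2 * Real.exp (-((n:ℝ) * (ε^2/8)))) := by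
  set T : Ω → ℝ := fun ω => ∑ i, ∑ j, Complex.normSq (Y ω i j) with hT
  set Nr : ℝ := ((n * kk : ℕ) : ℝ) with hNrdef
  have hNr0 : (0:ℝ) < Nr := by
    rw [hNrdef]; exact_mod_cast Nat.mul_pos hn hkk
  have hNrn : (n:ℝ) ≤ Nr := by
    rw [hNrdef]; push_cast
    have h1 : (1:ℝ) ≤ (kk:ℝ) := by exact_mod_cast hkk
    have h2 : (0:ℝ) ≤ (n:ℝ) := Nat.cast_nonneg n
    nlinarith
  -- mgf computation
  have hmgf : ∀ t : ℝ, t < 1 → mgf T volume t = ((1-t)⁻¹) ^ (n * kk) := by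
    intro t ht
    have h4 : ∫ M, Real.exp (t * ∑ i, ∑ j, Complex.normSq (M i j))
        ∂((volume : Measure Ω).map Y) = ∫ ω, Real.exp (t * T ω) ∂(volume : Measure Ω) :=
      integral_map hYm.aemeasurable
        ((Real.measurable_exp.comp ((measurable_TFun n kk).const_mul t)).aestronglyMeasurable)
    have h5 : mgf T volume t = ∫ ω, Real.exp (t * T ω) ∂(volume : Measure Ω) := rfl
    rw [h5, ← h4, hY, mgf_gaussMatrix n kk ht]
  have hint : ∀ t : ℝ, t < 1 → Integrable (fun ω => Real.exp (t * T ω)) volume := by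
    intro t ht
    have := (integrable_map_measure
      ((Real.measurable_exp.comp ((measurable_TFun n kk).const_mul t)).aestronglyMeasurable)
      hYm.aemeasurable).mp (by rw [hY]; exact integrable_gaussMatrix n kk ht)
    exact this
  -- upper tail
  have hup := measure_ge_le_exp_mul_mgf (μ := volume) (X := T) (Nr*(1+ε))
    (by linarith : (0:ℝ) ≤ ε/4) (hint (ε/4) (by linarith))
  rw [hmgf (ε/4) (by linarith)] at hup
  have hup2 : (volume {ω : Ω | Nr*(1+ε) ≤ T ω}).toReal ≤ Real.exp (-(Nr * (ε^2/8))) :=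
    le_trans hup (chernoff_up_num hε0 hε1 hNr0.le (n*kk) rfl)
  -- lower tail
  have hdown := measure_le_le_exp_mul_mgf (μ := volume) (X := T) (Nr*(1-ε))
    (by linarith : -(ε/2) ≤ 0) (hint (-(ε/2)) (by linarith))
  rw [hmgf (-(ε/2)) (by linarith)] at hdown
  have hdown2 : (volume {ω : Ω | T ω ≤ Nr*(1-ε)}).toReal ≤ Real.exp (-(Nr * (ε^2/8))) :=
    le_trans hdown (chernoff_down_num hε0 hε1 hNr0.le (n*kk) rfl)
  -- inclusion
  have hincl : {ω : Ω | ε ≤ |T ω / ((n:ℝ)*(kk:ℝ)) - 1|}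
      ⊆ {ω : Ω | Nr*(1+ε) ≤ T ω} ∪ {ω : Ω | T ω ≤ Nr*(1-ε)} := by
    intro ω hω
    simp only [Set.mem_setOf_eq] at hω
    have hcast : (n:ℝ)*(kk:ℝ) = Nr := by rw [hNrdef]; push_cast; ring
    rw [hcast] at hω
    rcases le_abs.mp hω with h | h
    · left
      have h2 : 1 + ε ≤ T ω / Nr := by linarith
      have := (le_div_iff₀ hNr0).mp h2
      simp only [Set.mem_setOf_eq]; linarith
    · right
      have h2 : T ω / Nr ≤ 1 - ε := by linarith
      have := (div_le_iff₀ hNr0).mp h2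
      simp only [Set.mem_setOf_eq]; linarith
  calc volume {ω : Ω | ε ≤ |T ω / ((n:ℝ)*(kk:ℝ)) - 1|}
      ≤ volume ({ω : Ω | Nr*(1+ε) ≤ T ω} ∪ {ω : Ω | T ω ≤ Nr*(1-ε)}) := measure_mono hincl
    _ ≤ volume {ω : Ω | Nr*(1+ε) ≤ T ω} + volume {ω : Ω | T ω ≤ Nr*(1-ε)} :=
        measure_union_le _ _
    _ ≤ ENNReal.ofReal (Real.exp (-(Nr * (ε^2/8)))) + ENNReal.ofReal (Real.exp (-(Nr * (ε^2/8)))) := by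
        gcongr
        · rw [← ENNReal.ofReal_toReal (measure_ne_top volume _)]
          exact ENNReal.ofReal_le_ofReal hup2
        · rw [← ENNReal.ofReal_toReal (measure_ne_top volume _)]
          exact ENNReal.ofReal_le_ofReal hdown2
    _ ≤ ENNReal.ofReal (2 * Real.exp (-((n:ℝ) * (ε^2/8)))) := by
        rw [← ENNReal.ofReal_add (Real.exp_nonneg _) (Real.exp_nonneg _)]
        apply ENNReal.ofReal_le_ofReal
        have hexp : Real.exp (-(Nr * (ε^2/8))) ≤ Real.exp (-((n:ℝ) * (ε^2/8))) := by
          rw [Real.exp_le_exp]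
          nlinarith [sq_nonneg ε]
        linarith


lemma lln {Ω : Type*} [MeasureSpace Ω] [IsProbabilityMeasure (volume : Measure Ω)]
    (k : ℕ → ℕ) (hk : ∀ n, 0 < k n)
    (X : ∀ n : ℕ, Ω → Matrix (Fin n) (Fin (k n)) ℂ)
    (hmeas : ∀ n, Measurable (X n))
    (hlaw : ∀ n, (volume : Measure Ω).map (X n) = gaussMatrix n (k n)) :
    ∀ᵐ ω : Ω, Tendsto
      (fun n : ℕ => (∑ i, ∑ j, Complex.normSq (X n ω i j)) / ((n:ℝ)*((k n):ℝ)))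
      atTop (𝓝 1) := by
  have key : ∀ m : ℕ, ∀ᵐ ω : Ω, ∀ᶠ n in atTop,
      |(∑ i, ∑ j, Complex.normSq (X n ω i j)) / ((n:ℝ)*((k n):ℝ)) - 1| < ((m:ℝ)+1)⁻¹ := by
    intro m
    set ε : ℝ := ((m:ℝ)+1)⁻¹ with hεdef
    have hε0 : 0 < ε := by positivity
    have hε1 : ε ≤ 1 := by
      rw [hεdef]
      rw [inv_le_one_iff₀]
      right; linarith [Nat.cast_nonneg (α := ℝ) m]
    have hbound : ∀ n : ℕ,
        volume {ω : Ω | ε ≤ |(∑ i, ∑ j, Complex.normSq (X n ω i j)) / ((n:ℝ)*((k n):ℝ)) - 1|}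
          ≤ ENNReal.ofReal (2 * Real.exp (-(n:ℝ) * (ε^2/8))) := by
      intro n
      rcases Nat.eq_zero_or_pos n with rfl | hn
      · calc volume _ ≤ 1 := prob_le_one
          _ ≤ ENNReal.ofReal (2 * Real.exp (-(0:ℕ) * (ε^2/8))) := by
              norm_num
      · have := tail_bound hn (hk n) (X n) (hmeas n) (hlaw n) hε0 hε1
        calc volume {ω : Ω | ε ≤ |(∑ i, ∑ j, Complex.normSq (X n ω i j)) / ((n:ℝ)*((k n):ℝ)) - 1|}
            ≤ ENNReal.ofReal (2 * Real.exp (-((n:ℝ) * (ε^2/8)))) := this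
          _ = ENNReal.ofReal (2 * Real.exp (-(n:ℝ) * (ε^2/8))) := by ring_nf
    have hsummable : Summable (fun n : ℕ => 2 * Real.exp (-(n:ℝ) * (ε^2/8))) :=
      summable_exp_neg _ (by positivity)
    have hsum : (∑' n : ℕ,
        volume {ω : Ω | ε ≤ |(∑ i, ∑ j, Complex.normSq (X n ω i j)) / ((n:ℝ)*((k n):ℝ)) - 1|}) ≠ ⊤ := by
      apply ne_top_of_le_ne_top _ (ENNReal.tsum_le_tsum hbound)
      rw [← ENNReal.ofReal_tsum_of_nonneg (fun n => by positivity) hsummable]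
      exact ENNReal.ofReal_ne_top
    have hfreq := measure_setOf_frequently_eq_zero
      (p := fun n ω => ε ≤ |(∑ i, ∑ j, Complex.normSq (X n ω i j)) / ((n:ℝ)*((k n):ℝ)) - 1|) hsum
    rw [← compl_mem_ae_iff] at hfreq
    filter_upwards [hfreq] with ω hω
    rw [Set.mem_compl_iff, Set.mem_setOf_eq, Filter.not_frequently] at hω
    filter_upwards [hω] with n hn
    exact lt_of_not_ge hn
  rw [← ae_all_iff] at key
  filter_upwards [key] with ω hω
  rw [Metric.tendsto_atTop]
  intro δ hδ
  obtain ⟨m, hm⟩ := exists_nat_one_div_lt hδ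
  obtain ⟨N, hN⟩ := Filter.eventually_atTop.mp (hω m)
  refine ⟨N, fun n hn => ?_⟩
  rw [Real.dist_eq]
  calc |(∑ i, ∑ j, Complex.normSq (X n ω i j)) / ((n:ℝ)*((k n):ℝ)) - 1| < ((m:ℝ)+1)⁻¹ := hN n hn
    _ = 1/((m:ℝ)+1) := by rw [one_div]
    _ < δ := hm

end StmtAux

/-- almost surely, `c n λ_max(ρ_n) → (√c + 1)²`, assuming the
corresponding Wishart result `λ_max(W_n)/n → (√c + 1)²` almost surely. -/
theorem stmt19 {Ω : Type*} [MeasureSpace Ω] [IsProbabilityMeasure (volume : Measure Ω)]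
    (c : ℝ) (hc : 0 < c) (k : ℕ → ℕ) (hk : ∀ n, 0 < k n)
    (hkc : Tendsto (fun n : ℕ => (k n : ℝ) / n) atTop (𝓝 c))
    (X : ∀ n : ℕ, Ω → Matrix (Fin n) (Fin (k n)) ℂ)
    (hmeas : ∀ n, Measurable (X n))
    (hlaw : ∀ n, (volume : Measure Ω).map (X n) = gaussMatrix n (k n)) :
    (∀ᵐ ω : Ω, Tendsto
        (fun n : ℕ =>
          (⨆ i, (Matrix.isHermitian_mul_conjTranspose_self (X n ω)).eigenvalues i) / (n : ℝ))
        atTop (𝓝 ((Real.sqrt c + 1) ^ 2))) →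
      ∀ᵐ ω : Ω, Tendsto
        (fun n : ℕ =>
          c * n * ⨆ i, (densityMatrix_isHermitian (X n ω)).eigenvalues i)
        atTop (𝓝 ((Real.sqrt c + 1) ^ 2)) := by
  intro hW
  have hLLN := lln k hk X hmeas hlaw
  filter_upwards [hW, hLLN] with ω h1 h2
  have hcne : c ≠ 0 := hc.ne'
  have t0 : Tendsto (fun n : ℕ => c / ((k n : ℝ)/(n:ℝ))) atTop (𝓝 (c/c)) :=
    tendsto_const_nhds.div hkc hcne
  rw [div_self hcne] at t0
  have t1 : Tendsto (fun n : ℕ => c * (n:ℝ) / ((k n : ℝ))) atTop (𝓝 1) := by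
    apply t0.congr'
    filter_upwards [eventually_ge_atTop 1] with n hn
    have hn0 : ((n:ℝ)) ≠ 0 := by
      have : 0 < n := hn
      positivity
    have hk0 : (((k n):ℝ)) ≠ 0 := by
      have : 0 < k n := hk n
      positivity
    field_simp
  have t2 : Tendsto (fun n : ℕ =>
      ((∑ i, ∑ j, Complex.normSq (X n ω i j)) / ((n:ℝ)*((k n):ℝ)))⁻¹) atTop (𝓝 1) := by
    have := h2.inv₀ one_ne_zero
    simpa using this
  have hF : Tendsto (fun n : ℕ =>
      ((⨆ i, (Matrix.isHermitian_mul_conjTranspose_self (X n ω)).eigenvalues i) / (n : ℝ))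
        * ((c * (n:ℝ) / ((k n):ℝ))
          * ((∑ i, ∑ j, Complex.normSq (X n ω i j)) / ((n:ℝ)*((k n):ℝ)))⁻¹))
      atTop (𝓝 ((Real.sqrt c + 1) ^ 2)) := by
    have := h1.mul (t1.mul t2)
    simpa using this
  refine Filter.Tendsto.congr' ?_ hF
  have hev1 : ∀ᶠ n in atTop,
      1/2 < (∑ i, ∑ j, Complex.normSq (X n ω i j)) / ((n:ℝ)*((k n):ℝ)) :=
    h2.eventually (eventually_gt_nhds (by norm_num))
  filter_upwards [hev1, eventually_ge_atTop 1] with n hhalf hn1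
  have hn : 0 < n := hn1
  have hn0 : (0:ℝ) < (n:ℝ) := by exact_mod_cast hn
  have hk0 : (0:ℝ) < ((k n):ℝ) := by exact_mod_cast hk n
  have hnk : (0:ℝ) < (n:ℝ)*((k n):ℝ) := by positivity
  set S : ℝ := ∑ i, ∑ j, Complex.normSq (X n ω i j) with hSdef
  have hSpos : 0 < S := by
    have hq : 0 < S / ((n:ℝ)*((k n):ℝ)) := by linarith
    rcases div_pos_iff.mp hq with ⟨h, _⟩ | ⟨_, h⟩
    · exact h
    · linarith
  have htr : Matrix.trace (X n ω * (X n ω)ᴴ) = ((S : ℝ) : ℂ) := trace_eq_sum_normSq _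
  have hsup := sup_eig_scale hn (X n ω) hSpos htr
  rw [hsup]
  field_simp
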